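/- The square of the covariant derivative is the curvature: Let A be a gauge potential on E and φ : E → (Fin n → ℂ) smooth (both at least C²). Then for all x ∈ E and v, w ∈ E, (fderiv ℝ (fun y => (D_A φ) y w) x) v - (fderiv ℝ (fun y => (D_A φ) y v) x) w + (A x v).mulVec ((D_A φ) x w) - (A x w).mulVec ((D_A φ) x v) = (F_A x (v, w)).mulVec (φ x). -/

import Mathlib

open Matrix

attribute [local instance] Matrix.linftyOpNormedRing Matrix.linftyOpNormedAlgebra

variable {E : Type*} [NormedAddCommGroup E] [NormedSpace ℝ E] [FiniteDimensional ℝ E] {n : ℕ}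

/-- The curvature of a gauge potential:
`F_A x (v, w) = (fderiv ℝ A x v) w - (fderiv ℝ A x w) v + (A x v) * (A x w) - (A x w) * (A x v)`. -/
noncomputable def curv (A : E → (E →L[ℝ] Matrix (Fin n) (Fin n) ℂ)) (x v w : E) :
    Matrix (Fin n) (Fin n) ℂ :=
  (fderiv ℝ A x v) w - (fderiv ℝ A x w) v + (A x v) * (A x w) - (A x w) * (A x v)

/-- The covariant derivative of a matter field `φ` with respect to a gauge potential `A`:
`(D_A φ) x v = fderiv ℝ φ x v + (A x v).mulVec (φ x)`. -/
noncomputable def covD (A : E → (E →L[ℝ] Matrix (Fin n) (Fin n) ℂ))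
    (φ : E → (Fin n → ℂ)) (x v : E) : Fin n → ℂ :=
  fderiv ℝ φ x v + (A x v).mulVec (φ x)

/-- `mulVec` as a real-bilinear map. -/
noncomputable def mulVecBil (n : ℕ) :
    Matrix (Fin n) (Fin n) ℂ →ₗ[ℝ] (Fin n → ℂ) →ₗ[ℝ] (Fin n → ℂ) :=
  LinearMap.mk₂ ℝ Matrix.mulVec
    (fun M N u => Matrix.add_mulVec M N u)
    (fun c M u => Matrix.smul_mulVec c M u)
    (fun M u v => Matrix.mulVec_add M u v)
    (fun c M u => Matrix.mulVec_smul M c u)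

/-- `mulVec` as a continuous real-bilinear map. -/
noncomputable def mulVecL (n : ℕ) :
    Matrix (Fin n) (Fin n) ℂ →L[ℝ] (Fin n → ℂ) →L[ℝ] (Fin n → ℂ) :=
  LinearMap.toContinuousLinearMap
    { toFun := fun M => LinearMap.toContinuousLinearMap (mulVecBil n M)
      map_add' := fun M N => by ext u; simp
      map_smul' := fun c M => by ext u; simp }

@[simp] lemma mulVecL_apply (M : Matrix (Fin n) (Fin n) ℂ) (u : Fin n → ℂ) :
    mulVecL n M u = M.mulVec u := rfl

lemma fderiv_covD (A : E → (E →L[ℝ] Matrix (Fin n) (Fin n) ℂ)) (hA : @ContDiff ℝ _ E _ _ (E →L[ℝ] Matrix (Fin n) (Fin n) ℂ)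
      ContinuousLinearMap.toNormedAddCommGroup ContinuousLinearMap.toNormedSpace 2 A)
    (φ : E → (Fin n → ℂ)) (hφ : ContDiff ℝ 2 φ) (x v w : E) :
    fderiv ℝ (fun y => covD A φ y w) x v =
      fderiv ℝ (fderiv ℝ φ) x v w + ((fderiv ℝ A x v) w).mulVec (φ x)
        + (A x w).mulVec (fderiv ℝ φ x v) := by
  letI : NormedAddCommGroup (E →L[ℝ] Matrix (Fin n) (Fin n) ℂ) := ContinuousLinearMap.toNormedAddCommGroup
  letI : NormedSpace ℝ (E →L[ℝ] Matrix (Fin n) (Fin n) ℂ) := ContinuousLinearMap.toNormedSpace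
  have hφ' : ContDiff ℝ 1 (fderiv ℝ φ) := hφ.fderiv_right (le_refl 2)
  have hd : HasFDerivAt (fderiv ℝ φ) (fderiv ℝ (fderiv ℝ φ) x) x :=
    (hφ'.differentiable one_ne_zero x).hasFDerivAt
  have hAx : HasFDerivAt A (fderiv ℝ A x) x :=
    ((hA.differentiable two_ne_zero) x).hasFDerivAt
  have hφx : HasFDerivAt φ (fderiv ℝ φ x) x :=
    ((hφ.differentiable two_ne_zero) x).hasFDerivAt
  -- derivative of `fun y => fderiv ℝ φ y w`
  have h1 : HasFDerivAt (fun y => fderiv ℝ φ y w)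
      ((fderiv ℝ φ x).comp (0 : E →L[ℝ] E) + (fderiv ℝ (fderiv ℝ φ) x).flip w) x := by
    simpa using hd.clm_apply (hasFDerivAt_const w x)
  -- derivative of `fun y => A y w`
  have hAw : HasFDerivAt (fun y => A y w)
      ((A x).comp (0 : E →L[ℝ] E) + (show E →L[ℝ] Matrix (Fin n) (Fin n) ℂ from (fderiv ℝ A x).flip w)) x := by
    exact hAx.clm_apply (hasFDerivAt_const w x)
  -- derivative of `fun y => mulVecL n (A y w)`
  have hc : HasFDerivAt (fun y => mulVecL n (A y w))
      ((mulVecL n).comp ((A x).comp (0 : E →L[ℝ] E) + (show E →L[ℝ] Matrix (Fin n) (Fin n) ℂ from (fderiv ℝ A x).flip w))) x :=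
    (mulVecL n).hasFDerivAt.comp x hAw
  -- derivative of `fun y => (A y w).mulVec (φ y)`
  have h2 : HasFDerivAt (fun y => (A y w).mulVec (φ y))
      ((mulVecL n (A x w)).comp (fderiv ℝ φ x)
        + (((mulVecL n).comp ((A x).comp (0 : E →L[ℝ] E) + (show E →L[ℝ] Matrix (Fin n) (Fin n) ℂ from (fderiv ℝ A x).flip w))).flip (φ x))) x := by
    have := hc.clm_apply hφx
    simpa using this
  have h3 : HasFDerivAt (fun y => covD A φ y w)
      (((fderiv ℝ φ x).comp (0 : E →L[ℝ] E) + (fderiv ℝ (fderiv ℝ φ) x).flip w)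
        + ((mulVecL n (A x w)).comp (fderiv ℝ φ x)
          + (((mulVecL n).comp ((A x).comp (0 : E →L[ℝ] E) + (show E →L[ℝ] Matrix (Fin n) (Fin n) ℂ from (fderiv ℝ A x).flip w))).flip (φ x)))) x := by
    exact h1.add h2
  rw [h3.fderiv]
  dsimp only
  simp
  erw [ContinuousLinearMap.add_apply, ContinuousLinearMap.zero_apply, zero_add, ContinuousLinearMap.flip_apply]
  abel

/-- The square of the covariant derivative is the curvature. -/
theorem covariant_derivative_squared_eq_curvature
    (hn : 0 < n)
    (A : E → (E →L[ℝ] Matrix (Fin n) (Fin n) ℂ)) (hA : @ContDiff ℝ _ E _ _ (E →L[ℝ] Matrix (Fin n) (Fin n) ℂ)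
      ContinuousLinearMap.toNormedAddCommGroup ContinuousLinearMap.toNormedSpace 2 A)
    (φ : E → (Fin n → ℂ)) (hφ : ContDiff ℝ 2 φ) :
    ∀ x v w : E,
      (fderiv ℝ (fun y => covD A φ y w) x) v - (fderiv ℝ (fun y => covD A φ y v) x) w
        + (A x v).mulVec (covD A φ x w) - (A x w).mulVec (covD A φ x v)
        = (curv A x v w).mulVec (φ x) := by
  intro x v w
  have hsymm : fderiv ℝ (fderiv ℝ φ) x v w = fderiv ℝ (fderiv ℝ φ) x w v := by
    have hφ' : ContDiff ℝ 1 (fderiv ℝ φ) := hφ.fderiv_right (le_refl 2)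
    exact second_derivative_symmetric
      (fun y => ((hφ.differentiable two_ne_zero) y).hasFDerivAt)
      ((hφ'.differentiable one_ne_zero x).hasFDerivAt) v w
  rw [fderiv_covD A hA φ hφ x v w, fderiv_covD A hA φ hφ x w v]
  simp only [covD, curv, hsymm, Matrix.mulVec_add, Matrix.add_mulVec, Matrix.sub_mulVec,
    ← Matrix.mulVec_mulVec]
  abel
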